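/- Let A: ℝⁿ → ℝⁿ be measurable, u: ℝⁿ → ℂ measurable, and for s ∈ (0,1) define the magnetic Hölder quotient D_s^A u(x,y) = (u(x) − e^{i(x−y)·A((x+y)/2)} u(y)) / |x−y|^s, and the classical quotient D_s v(x,y) = (v(x) − v(y))/|x−y|^s. Then |D_s |u| (x,y)| ≤ |D_s^A u(x,y)| for a.e. x, y ∈ ℝⁿ with x ≠ y. -/

import Mathlib

open MeasureTheory Real Filter Set Metric
open scoped ENNReal Topology

noncomputable section

/-- A Young function given by its right-continuous density `phi`. -/
structure YoungFunction where
  phi : ℝ → ℝ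
  phi_zero : phi 0 = 0
  phi_pos : ∀ t > 0, 0 < phi t
  phi_mono : MonotoneOn phi (Set.Ici 0)
  phi_rightCont : ∀ t ≥ 0, ContinuousWithinAt phi (Set.Ici t) t
  phi_tendsto : Filter.Tendsto phi Filter.atTop Filter.atTop

/-- The Young function itself: `G t = ∫₀ᵗ φ(τ) dτ`. -/
def YoungFunction.G (Y : YoungFunction) (t : ℝ) : ℝ := ∫ τ in (0:ℝ)..t, Y.phi τ

/-- Condition (L): `1 ≤ p⁻ ≤ t G'(t)/G(t) ≤ p⁺ < ∞` for all `t > 0`. -/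
def YoungFunction.CondL (Y : YoungFunction) (pm pp : ℝ) : Prop :=
  1 ≤ pm ∧ pm ≤ pp ∧
    ∀ t > 0, pm ≤ t * Y.phi t / Y.G t ∧ t * Y.phi t / Y.G t ≤ pp

/-- The associated Young function `Ḡ(t) = ∫₀ᵗ G(τ)/τ dτ`. -/
def YoungFunction.Gbar (Y : YoungFunction) (t : ℝ) : ℝ := ∫ τ in (0:ℝ)..t, Y.G τ / τ

/-- The magnetic phase factor `e^{i (x-y)·A((x+y)/2)}`. -/
def phase (n : ℕ) (A : EuclideanSpace ℝ (Fin n) → EuclideanSpace ℝ (Fin n))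
    (x y : EuclideanSpace ℝ (Fin n)) : ℂ :=
  Complex.exp (Complex.I * ((inner ℝ (x - y) (A ((2:ℝ)⁻¹ • (x + y))) : ℝ) : ℂ))

/-- The magnetic Hölder quotient of order `s`. -/
def DsA (n : ℕ) (A : EuclideanSpace ℝ (Fin n) → EuclideanSpace ℝ (Fin n)) (s : ℝ)
    (u : EuclideanSpace ℝ (Fin n) → ℂ) (x y : EuclideanSpace ℝ (Fin n)) : ℂ :=
  (u x - phase n A x y * u y) / ((‖x - y‖ ^ s : ℝ) : ℂ)

/-- The classical Hölder quotient of order `s`. -/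
def Ds (n : ℕ) (s : ℝ) (v : EuclideanSpace ℝ (Fin n) → ℝ)
    (x y : EuclideanSpace ℝ (Fin n)) : ℝ :=
  (v x - v y) / ‖x - y‖ ^ s

/-- The modular `I_{s,G}^A(u) = ∬ G(|D_s^A u(x,y)|) dμ`, `dμ = dx dy/|x-y|^n`. -/
def modular (n : ℕ) (Y : YoungFunction)
    (A : EuclideanSpace ℝ (Fin n) → EuclideanSpace ℝ (Fin n)) (s : ℝ)
    (u : EuclideanSpace ℝ (Fin n) → ℂ) : ℝ≥0∞ :=
  ∫⁻ x, ∫⁻ y, ENNReal.ofReal (Y.G ‖DsA n A s u x y‖ / ‖x - y‖ ^ (n : ℝ))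

/-- The Luxemburg (magnetic Gagliardo) seminorm. -/
def luxSeminorm (n : ℕ) (Y : YoungFunction)
    (A : EuclideanSpace ℝ (Fin n) → EuclideanSpace ℝ (Fin n)) (s : ℝ)
    (u : EuclideanSpace ℝ (Fin n) → ℂ) : ℝ :=
  sInf {l : ℝ | 0 < l ∧ modular n Y A s (fun x => u x / (l : ℂ)) ≤ 1}

/-- Membership in `W^{s,G}_{A,0}(ℝⁿ;ℂ)`: closure of `C_c^∞` w.r.t. the Luxemburg
seminorm. -/
def MemW0 (n : ℕ) (Y : YoungFunction)
    (A : EuclideanSpace ℝ (Fin n) → EuclideanSpace ℝ (Fin n)) (s : ℝ)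
    (u : EuclideanSpace ℝ (Fin n) → ℂ) : Prop :=
  Measurable u ∧ ∀ ε > 0, ∃ v : EuclideanSpace ℝ (Fin n) → ℂ,
    ContDiff ℝ (⊤ : ℕ∞) v ∧ HasCompactSupport v ∧
      luxSeminorm n Y A s (fun x => u x - v x) < ε

/-- The surface measure `ωₙ` of the unit sphere in `ℝⁿ` (equal to `n` times the
volume of the unit ball). -/
def omegaN (n : ℕ) : ℝ :=
  n * (volume (Metric.ball (0 : EuclideanSpace ℝ (Fin n)) 1)).toReal

/-- Diamagnetic inequality for Hölder quotients: `|D_s|u|| ≤ |D_s^A u|`. -/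
theorem diamagnetic_quotient (n : ℕ)
    (A : EuclideanSpace ℝ (Fin n) → EuclideanSpace ℝ (Fin n)) (hA : Measurable A)
    (s : ℝ) (hs : s ∈ Set.Ioo (0:ℝ) 1)
    (u : EuclideanSpace ℝ (Fin n) → ℂ) (hu : Measurable u) :
    ∀ᵐ p : EuclideanSpace ℝ (Fin n) × EuclideanSpace ℝ (Fin n),
      p.1 ≠ p.2 →
        |Ds n s (fun x => ‖u x‖) p.1 p.2| ≤ ‖DsA n A s u p.1 p.2‖ := by
  refine Filter.Eventually.of_forall ?_
  rintro ⟨x, y⟩ hxy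
  have hd : (0:ℝ) < ‖x - y‖ ^ s :=
    Real.rpow_pos_of_pos (norm_pos_iff.mpr (sub_ne_zero.mpr hxy)) s
  simp only [Ds, DsA]
  rw [norm_div, Complex.norm_real, Real.norm_eq_abs, abs_div,
    abs_of_pos hd]
  apply div_le_div_of_nonneg_right ?_ hd.le
  have hph : ‖phase n A x y‖ = 1 := by
    simp [phase, mul_comm, Complex.norm_exp]
  calc |‖u x‖ - ‖u y‖| = |‖u x‖ - ‖phase n A x y * u y‖| := by
        rw [norm_mul, hph, one_mul]
    _ ≤ ‖u x - phase n A x y * u y‖ := abs_norm_sub_norm_le _ _
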